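/- arXiv:1405.3390 — 2 statements merged into one kernel-verified Lean document; each statement's English description precedes it below -/
import Mathlib

section
/- For every g ≥ 1, every 1-backbone shape of genus g with n arcs satisfies 2g+1 ≤ n ≤ 6g−1. -/
namespace RNA

noncomputable section

/-- The forward orbit of `x` under iteration of `f`. -/
def orbitOf (f : ℕ → ℕ) (x : ℕ) : Set ℕ := {y | ∃ j : ℕ, f^[j] x = y}

/-- The number of cycles (orbits) of `f` among the points `< k`. -/
def numCyclesOn (f : ℕ → ℕ) (k : ℕ) : ℕ :=
  Set.ncard {S : Set ℕ | ∃ x, x < k ∧ S = orbitOf f x}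

/-- The number of cycles of length at least `3` among the points `< k` (multiloops). -/
def numMultiOn (f : ℕ → ℕ) (k : ℕ) : ℕ :=
  Set.ncard {S : Set ℕ | (∃ x, x < k ∧ S = orbitOf f x) ∧ 3 ≤ S.ncard}

/-- The cyclic permutation `(0 1 ⋯ k-1)`, as a function on `ℕ` fixing everything `≥ k`. -/
def gammaOne (k : ℕ) : ℕ → ℕ := fun i => if i + 1 = k then 0 else if i < k then i + 1 else i

/-- The permutation with the two cycles `(0 ⋯ m-1)` and `(m ⋯ k-1)`. -/
def gammaTwo (m k : ℕ) : ℕ → ℕ := fun i =>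
  if i + 1 = m then 0 else if i + 1 = k then m else if i < k then i + 1 else i

/-- A planted 1-backbone diagram with `n` arcs: an involution on the vertices
`0, 1, …, 2n-1` (shifting the paper's labels `1, …, 2n` by one). -/
structure OneD where
  n : ℕ
  f : ℕ → ℕ

namespace OneD

/-- Well-formedness: `n ≥ 1`, `f` is a fixed-point-free involution of `{0, …, 2n-1}`
(extended by the identity elsewhere) pairing `0` with `2n-1` (the rainbow). -/
def WF (D : OneD) : Prop :=
  1 ≤ D.n ∧ (∀ i, i < 2 * D.n → D.f i < 2 * D.n) ∧
    (∀ i, 2 * D.n ≤ i → D.f i = i) ∧ (∀ i, D.f (D.f i) = i) ∧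
    (∀ i, i < 2 * D.n → D.f i ≠ i) ∧ D.f 0 = 2 * D.n - 1

/-- `{i,j}` is an arc. -/
def arc (D : OneD) (i j : ℕ) : Prop := i < 2 * D.n ∧ D.f i = j

/-- A shape: no 1-arc other than possibly the rainbow, and no stack
(no pair of arcs `{i,j}`, `{i+1,j-1}` with `i+1 < j-1`). -/
def IsShape (D : OneD) : Prop :=
  (∀ i, D.arc i (i + 1) → i = 0 ∧ i + 1 = 2 * D.n - 1) ∧
  (∀ i j, D.arc i j → D.arc (i + 1) (j - 1) → ¬ (i + 1 < j - 1))

/-- The boundary permutation `α ∘ γ`. -/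
def bd (D : OneD) : ℕ → ℕ := D.f ∘ gammaOne (2 * D.n)

/-- The number `r` of boundary components. -/
def r (D : OneD) : ℕ := numCyclesOn D.bd (2 * D.n)

/-- The number of multiloops: boundary components of length at least 3. -/
def nMulti (D : OneD) : ℕ := numMultiOn D.bd (2 * D.n)

/-- The genus `g`, defined by `2 - 2g - r = 1 - n`. -/
def HasGenus (D : OneD) (g : ℕ) : Prop := 2 * g + D.r = D.n + 1

/-- A-shape: the vertex following the partner of vertex `1` (paper's vertex `2`)
is paired with vertex `2n-2` (paper's vertex `2n-1`); only for `n ≥ 2`. -/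
def IsA (D : OneD) : Prop := 2 ≤ D.n ∧ D.f (D.f 1 + 1) = 2 * D.n - 2

/-- B-shape: a shape with `n ≥ 2` arcs which is not an A-shape. -/
def IsB (D : OneD) : Prop := 2 ≤ D.n ∧ D.f (D.f 1 + 1) ≠ 2 * D.n - 2

end OneD

/-- The set of 1-backbone shapes of genus `g`. -/
def oneShapeSet (g : ℕ) : Set OneD := {D | D.WF ∧ D.IsShape ∧ D.HasGenus g}

/-- The set of 1-backbone shapes of genus `g` with `n` arcs. -/
def oneShapeSetN (g n : ℕ) : Set OneD := {D | D ∈ oneShapeSet g ∧ D.n = n}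

/-- The set of A-shapes of genus `g`. -/
def ASet (g : ℕ) : Set OneD := {D | D ∈ oneShapeSet g ∧ D.IsA}

/-- The set `𝒜_g(n)` of A-shapes of genus `g` with `n` arcs. -/
def ASetN (g n : ℕ) : Set OneD := {D | D ∈ oneShapeSetN g n ∧ D.IsA}

/-- The set `ℬ_g(n)` of B-shapes of genus `g` with `n` arcs. -/
def BSetN (g n : ℕ) : Set OneD := {D | D ∈ oneShapeSetN g n ∧ D.IsB}

/-- `s_g(n)`: the number of 1-backbone shapes of genus `g` with `n` arcs. -/
def sCount (g n : ℕ) : ℕ := (oneShapeSetN g n).ncard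

/-- `a_g(n)`: the number of A-shapes of genus `g` with `n` arcs. -/
def aCount (g n : ℕ) : ℕ := (ASetN g n).ncard

/-- A 2-backbone diagram with `n` arcs and cut point `m`: an involution on the
vertices `0, …, 2n-1`, with backbones `{0, …, m-1}` and `{m, …, 2n-1}`. -/
structure TwoD where
  n : ℕ
  m : ℕ
  f : ℕ → ℕ

namespace TwoD

/-- Well-formedness of a 2-backbone matching: two nonempty backbones and `f` a
fixed-point-free involution of `{0, …, 2n-1}` (extended by the identity). -/
def WF (D : TwoD) : Prop :=
  1 ≤ D.m ∧ D.m < 2 * D.n ∧ (∀ i, i < 2 * D.n → D.f i < 2 * D.n) ∧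
    (∀ i, 2 * D.n ≤ i → D.f i = i) ∧ (∀ i, D.f (D.f i) = i) ∧
    (∀ i, i < 2 * D.n → D.f i ≠ i)

/-- `{i,j}` is an arc. -/
def arc (D : TwoD) (i j : ℕ) : Prop := i < 2 * D.n ∧ D.f i = j

/-- `i` and `j` lie in the same backbone. -/
def sameBB (D : TwoD) (i j : ℕ) : Prop := (i < D.m ∧ j < D.m) ∨ (D.m ≤ i ∧ D.m ≤ j)

/-- Connectivity: some arc has one endpoint in each backbone. -/
def Connected (D : TwoD) : Prop := ∃ i j, D.arc i j ∧ i < D.m ∧ D.m ≤ j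

/-- A 2-backbone shape: both rainbows `{0, m-1}` and `{m, 2n-1}` are present,
there is no 1-arc (an arc `{i,i+1}` within one backbone) other than possibly the
rainbows, and no stack. -/
def IsShape (D : TwoD) : Prop :=
  2 ≤ D.m ∧ D.m + 2 ≤ 2 * D.n ∧ D.f 0 = D.m - 1 ∧ D.f D.m = 2 * D.n - 1 ∧
  (∀ i, D.arc i (i + 1) → D.sameBB i (i + 1) →
      (i = 0 ∧ i + 1 = D.m - 1) ∨ (i = D.m ∧ i + 1 = 2 * D.n - 1)) ∧
  (∀ i j, D.arc i j → D.arc (i + 1) (j - 1) → D.sameBB i (i + 1) →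
      D.sameBB (j - 1) j → ¬ (i + 1 < j - 1))

/-- The boundary permutation `α ∘ γ`. -/
def bd (D : TwoD) : ℕ → ℕ := D.f ∘ gammaTwo D.m (2 * D.n)

/-- The number `r` of boundary components. -/
def r (D : TwoD) : ℕ := numCyclesOn D.bd (2 * D.n)

/-- The number of multiloops: boundary components of length at least 3. -/
def nMulti (D : TwoD) : ℕ := numMultiOn D.bd (2 * D.n)

/-- The genus `g`, defined by `2 - 2g - r = 2 - n`. -/
def HasGenus (D : TwoD) (g : ℕ) : Prop := 2 * g + D.r = D.n

end TwoD

/-- The set `𝒬_g(n)` of connected 2-backbone shapes of genus `g` with `n` arcs. -/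
def twoShapeSetN (g n : ℕ) : Set TwoD :=
  {D | D.WF ∧ D.IsShape ∧ D.Connected ∧ D.HasGenus g ∧ D.n = n}

/-- `q_g(n)`: the number of connected 2-backbone shapes of genus `g` with `n` arcs. -/
def qCount (g n : ℕ) : ℕ := (twoShapeSetN g n).ncard

/-- The gluing map `η`: concatenate the two backbones (the two old rainbows become
ordinary arcs) and add a new rainbow over the resulting single backbone. -/
def glue (D : TwoD) : OneD :=
  ⟨D.n + 1, fun i =>
    if i = 0 then 2 * D.n + 1
    else if i = 2 * D.n + 1 then 0
    else if i ≤ 2 * D.n then D.f (i - 1) + 1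
    else i⟩

/-- Place an ordered pair of 1-backbone diagrams on two backbones,
each keeping its own rainbow. -/
def combine (S T : OneD) : TwoD :=
  ⟨S.n + T.n, 2 * S.n, fun i =>
    if i < 2 * S.n then S.f i
    else if i < 2 * (S.n + T.n) then T.f (i - 2 * S.n) + 2 * S.n
    else i⟩

/-- The set `𝒬'_g(N)`: the disjoint union of the set of connected 2-backbone shapes
of genus `g` with `N` arcs and the set of ordered pairs of 1-backbone shapes whose
genera are positive and sum to `g+1` and whose arc numbers sum to `N`. -/
def QprimeSetN (g N : ℕ) : Set (TwoD ⊕ OneD × OneD) :=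
  {x | Sum.elim
        (fun D : TwoD => D.WF ∧ D.IsShape ∧ D.Connected ∧ D.HasGenus g ∧ D.n = N)
        (fun p : OneD × OneD =>
          p.1.WF ∧ p.1.IsShape ∧ p.2.WF ∧ p.2.IsShape ∧
          (∃ g₁ g₂, 1 ≤ g₁ ∧ 1 ≤ g₂ ∧ g₁ + g₂ = g + 1 ∧
            p.1.HasGenus g₁ ∧ p.2.HasGenus g₂) ∧
          p.1.n + p.2.n = N) x}

/-- The gluing map `η` on `𝒬'`: glue a connected 2-backbone shape directly, and glue
a pair of 1-backbone shapes after placing them on two backbones. -/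
def etaMap : TwoD ⊕ OneD × OneD → OneD := Sum.elim glue fun p => glue (combine p.1 p.2)

/-- The 2-backbone diagram underlying an element of `𝒬'`. -/
def underlyingTwoD : TwoD ⊕ OneD × OneD → TwoD := Sum.elim id fun p => combine p.1 p.2

/-- Old label of the new vertex `k` after deleting the two points `a < b`. -/
def insTwo (a b k : ℕ) : ℕ := if k < a then k else if k + 1 < b then k + 1 else k + 2

/-- New label of the old vertex `j` after deleting the two points `a < b`. -/
def delTwo (a b j : ℕ) : ℕ := j - (if a < j then 1 else 0) - (if b < j then 1 else 0)

/-- The involution obtained from `f` by deleting the two paired points `a < b`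
and relabeling. -/
def deleteTwo (f : ℕ → ℕ) (a b : ℕ) : ℕ → ℕ := fun k => delTwo a b (f (insTwo a b k))

/-- The map `θ`: remove from an A-shape the arc joining the vertex following the
partner of vertex `1` (paper's vertex `2`) to the vertex `2n-2` (paper's `2n-1`),
deleting its two endpoints and relabeling. -/
def theta (D : OneD) : OneD := ⟨D.n - 1, deleteTwo D.f (D.f 1 + 1) (2 * D.n - 2)⟩

/-- The new cut point after deleting the points `a` and `b`. -/
def mshift (m a b : ℕ) : ℕ := m - (if a < m then 1 else 0) - (if b < m then 1 else 0)

/-- One reduction step: delete a 1-arc (an arc `{i,i+1}` within one backbone), or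
collapse a stack `{i,j}`, `{i+1,j-1}` by deleting the inner arc `{i+1,j-1}`. -/
def Step (M M' : TwoD) : Prop :=
  (∃ i, M.arc i (i + 1) ∧ M.sameBB i (i + 1) ∧
      M' = ⟨M.n - 1, mshift M.m i (i + 1), deleteTwo M.f i (i + 1)⟩) ∨
  (∃ i j, M.arc i j ∧ M.arc (i + 1) (j - 1) ∧ i + 1 < j - 1 ∧ M.sameBB i (i + 1) ∧
      M.sameBB (j - 1) j ∧
      M' = ⟨M.n - 1, mshift M.m (i + 1) (j - 1), deleteTwo M.f (i + 1) (j - 1)⟩)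

/-- A pure preshape: no 1-arc and no stack remain. -/
def Reduced (P : TwoD) : Prop :=
  (∀ i, ¬ (P.arc i (i + 1) ∧ P.sameBB i (i + 1))) ∧
  (∀ i j, P.arc i j → P.arc (i + 1) (j - 1) → P.sameBB i (i + 1) →
      P.sameBB (j - 1) j → ¬ (i + 1 < j - 1))

/-- Relabeling of an old vertex of a preshape after planting rainbows. -/
def newlab (m o : ℕ) : ℕ := if o < m then o + 1 else o + 3

/-- Plant a rainbow over each backbone of a pure preshape. -/
def plant (P : TwoD) : TwoD :=
  ⟨P.n + 2, P.m + 2, fun k =>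
    if k = 0 then P.m + 1
    else if k = P.m + 1 then 0
    else if k = P.m + 2 then 2 * P.n + 3
    else if k = 2 * P.n + 3 then P.m + 2
    else if k ≤ P.m then newlab P.m (P.f (k - 1))
    else if k ≤ 2 * P.n + 2 then newlab P.m (P.f (k - 3))
    else k⟩

/-- `s` is the shape of the 2-backbone matching `M`: iteratively collapse stacks and
delete 1-arcs until none remains, then add a rainbow over each backbone. -/
def ShapeOf (M s : TwoD) : Prop :=
  ∃ P : TwoD, Relation.ReflTransGen Step M P ∧ Reduced P ∧ s = plant P

/-- `q_s(n)`: the number of 2-backbone matchings with `n` arcs whose shape is `s`. -/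
def fiberCount (s : TwoD) (n : ℕ) : ℕ :=
  Set.ncard {M : TwoD | M.WF ∧ M.n = n ∧ ShapeOf M s}

/-- `w_g(n)`: the number of connected 2-backbone matchings with `n` arcs and genus `g`. -/
def wCount (g n : ℕ) : ℕ :=
  Set.ncard {M : TwoD | M.WF ∧ M.Connected ∧ M.HasGenus g ∧ M.n = n}

/-- `W_g(z) = Σ_n w_g(n) zⁿ`, as a formal power series. -/
def Wseries (g : ℕ) : PowerSeries ℤ := PowerSeries.mk fun n => (wCount g n : ℤ)

/-- The Catalan generating function `C₀(z) = Σ_n Catalan(n) zⁿ`. -/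
def catGF : PowerSeries ℤ := PowerSeries.mk fun n => (catalan n : ℤ)

/-- `q̃_g(l)`: the number of connected 2-backbone shapes of genus `g` having `l` arcs
besides their two rainbows. -/
def qlCount (g l : ℕ) : ℕ := qCount g (l + 2)

end


private lemma gammaOne_inj (k : ℕ) : Function.Injective (gammaOne k) := by
  intro a b hab
  unfold gammaOne at hab
  split_ifs at hab <;> omega

private lemma iter_lt {φ : ℕ → ℕ} {k : ℕ} (hlt : ∀ i, i < k → φ i < k)
    {x : ℕ} (hx : x < k) (j : ℕ) : φ^[j] x < k := by
  induction j with
  | zero => simpa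
  | succ j ih => rw [Function.iterate_succ_apply']; exact hlt _ ih

private lemma exists_period {φ : ℕ → ℕ} {k : ℕ} (hlt : ∀ i, i < k → φ i < k)
    (hinj : Function.Injective φ) {x : ℕ} (hx : x < k) :
    ∃ p, 0 < p ∧ φ^[p] x = x := by
  have hmap : ∀ j ∈ Finset.range (k + 1), φ^[j] x ∈ Finset.range k := fun j _ =>
    Finset.mem_range.2 (iter_lt hlt hx j)
  obtain ⟨a, _, b, _, hne, heq⟩ :=
    Finset.exists_ne_map_eq_of_card_lt_of_maps_to (by simp) hmap
  have key : ∀ a b : ℕ, a < b → φ^[a] x = φ^[b] x → ∃ p, 0 < p ∧ φ^[p] x = x := by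
    intro a b hab heq
    refine ⟨b - a, by omega, hinj.iterate a ?_⟩
    rw [← Function.iterate_add_apply, show a + (b - a) = b by omega]
    exact heq.symm
  rcases hne.lt_or_gt with h | h
  · exact key a b h heq
  · exact key b a h heq.symm

private lemma orbit_inv {φ : ℕ → ℕ} {k : ℕ} (hlt : ∀ i, i < k → φ i < k)
    (hinj : Function.Injective φ) {x y : ℕ} (hx : x < k)
    (hy : y ∈ orbitOf φ x) : x ∈ orbitOf φ y := by
  obtain ⟨j, rfl⟩ := hy
  obtain ⟨p, hp, hper⟩ := exists_period hlt hinj hx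
  have hmul : ∀ t, φ^[t * p] x = x := by
    intro t
    induction t with
    | zero => simp
    | succ t ih => rw [Nat.succ_mul, Function.iterate_add_apply, hper, ih]
  refine ⟨j * p - j, ?_⟩
  rw [← Function.iterate_add_apply,
    show j * p - j + j = j * p by
      have := Nat.le_mul_of_pos_right j hp; omega]
  exact hmul j

private lemma orbit_eq_of_mem {φ : ℕ → ℕ} {k : ℕ} (hlt : ∀ i, i < k → φ i < k)
    (hinj : Function.Injective φ) {x y : ℕ} (hx : x < k)
    (hy : y ∈ orbitOf φ x) : orbitOf φ y = orbitOf φ x := by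
  obtain ⟨j, hj⟩ := hy
  ext z
  constructor
  · rintro ⟨a, rfl⟩
    exact ⟨a + j, by rw [Function.iterate_add_apply, hj]⟩
  · rintro ⟨a, rfl⟩
    obtain ⟨b, hb⟩ := orbit_inv hlt hinj hx ⟨j, hj⟩
    exact ⟨a + b, by rw [Function.iterate_add_apply, hb]⟩

private lemma orbit_count {φ : ℕ → ℕ} {k : ℕ} (hlt : ∀ i, i < k → φ i < k)
    (hinj : Function.Injective φ) :
    ∃ Os : Finset (Set ℕ),
      (↑Os : Set (Set ℕ)) = {S : Set ℕ | ∃ x, x < k ∧ S = orbitOf φ x} ∧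
      ∑ S ∈ Os, S.ncard = k := by
  classical
  refine ⟨(Finset.range k).image (fun x => orbitOf φ x), ?_, ?_⟩
  · ext S
    simp only [Finset.coe_image, Finset.coe_range, Set.mem_image, Set.mem_Iio,
      Set.mem_setOf_eq]
    exact ⟨fun ⟨x, h1, h2⟩ => ⟨x, h1, h2.symm⟩, fun ⟨x, h1, h2⟩ => ⟨x, h1, h2.symm⟩⟩
  · have hfib : ∀ S ∈ (Finset.range k).image (fun x => orbitOf φ x),
        ((Finset.range k).filter (fun a => orbitOf φ a = S)).card = S.ncard := by
      intro S hS
      obtain ⟨x, hxk, rfl⟩ := Finset.mem_image.1 hS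
      have hxk' : x < k := Finset.mem_range.1 hxk
      have hset : (↑((Finset.range k).filter (fun a => orbitOf φ a = orbitOf φ x)) : Set ℕ)
          = orbitOf φ x := by
        ext y
        simp only [Finset.coe_filter, Finset.mem_range, Set.mem_setOf_eq]
        constructor
        · rintro ⟨_, hOy⟩
          rw [← hOy]; exact ⟨0, rfl⟩
        · intro hy
          obtain ⟨j, hj⟩ := id hy
          refine ⟨?_, orbit_eq_of_mem hlt hinj hxk' hy⟩
          rw [← hj]; exact iter_lt hlt hxk' j
      rw [← Set.ncard_coe_finset, hset]
    calc ∑ S ∈ (Finset.range k).image (fun x => orbitOf φ x), S.ncard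
        = ∑ S ∈ (Finset.range k).image (fun x => orbitOf φ x),
            ((Finset.range k).filter (fun a => orbitOf φ a = S)).card :=
          Finset.sum_congr rfl fun S hS => (hfib S hS).symm
      _ = (Finset.range k).card := (Finset.card_eq_sum_card_image _ _).symm
      _ = k := Finset.card_range k


/-- For every `g ≥ 1`, every 1-backbone shape of genus `g` with `n`
arcs satisfies `2g+1 ≤ n ≤ 6g-1`. -/
theorem shape_arc_bounds (g : ℕ) (hg : 1 ≤ g) (D : OneD)
    (hWF : D.WF) (hShape : D.IsShape) (hGenus : D.HasGenus g) :
    2 * g + 1 ≤ D.n ∧ D.n ≤ 6 * g - 1 := by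
  classical
  obtain ⟨hn1, hmapsf, hfixf, hinv, hfpf, hrb⟩ := hWF
  obtain ⟨hone, hstack⟩ := hShape
  have hinvol : Function.Involutive D.f := hinv
  have hinj : Function.Injective D.bd :=
    hinvol.injective.comp (gammaOne_inj (2 * D.n))
  have hlt : ∀ i, i < 2 * D.n → D.bd i < 2 * D.n := by
    intro i hi
    have hg1 : gammaOne (2 * D.n) i < 2 * D.n := by
      unfold gammaOne; split_ifs <;> omega
    exact hmapsf _ hg1
  have hbd : ∀ i, D.bd i = D.f (gammaOne (2 * D.n) i) := fun i => rfl
  have hk2 : 2 ≤ 2 * D.n := by omega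
  -- the fixed point at 2n-1
  have hfixtop : D.bd (2 * D.n - 1) = 2 * D.n - 1 := by
    rw [hbd]
    have : gammaOne (2 * D.n) (2 * D.n - 1) = 0 := by
      unfold gammaOne; split_ifs <;> omega
    rw [this, hrb]
  have horbtop : orbitOf D.bd (2 * D.n - 1) = {2 * D.n - 1} := by
    ext y
    constructor
    · rintro ⟨j, rfl⟩
      simp [Function.iterate_fixed hfixtop]
    · rintro h
      rcases h with rfl
      exact ⟨0, rfl⟩
  -- the orbit finset
  obtain ⟨Os, hOs, hsumtotal⟩ := orbit_count hlt hinj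
  have hmemOs : ∀ x, x < 2 * D.n → orbitOf D.bd x ∈ Os := by
    intro x hx
    rw [← Finset.mem_coe, hOs]
    exact ⟨x, hx, rfl⟩
  have hr : D.r = Os.card := by
    rw [OneD.r, numCyclesOn, ← hOs, Set.ncard_coe_finset]
  have htop_mem : orbitOf D.bd (2 * D.n - 1) ∈ Os := hmemOs _ (by omega)
  -- r ≥ 2
  have hr2 : 2 ≤ Os.card := by
    rw [show (2 : ℕ) = 1 + 1 from rfl]
    refine Finset.one_lt_card.2 ⟨orbitOf D.bd 0, hmemOs 0 (by omega),
      orbitOf D.bd (2 * D.n - 1), htop_mem, ?_⟩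
    intro h
    have h0 : (0 : ℕ) ∈ orbitOf D.bd 0 := ⟨0, rfl⟩
    rw [h, horbtop] at h0
    simp only [Set.mem_singleton_iff] at h0
    omega
  have hG : 2 * g + Os.card = D.n + 1 := by rw [← hr]; exact hGenus
  have hn2 : 2 ≤ D.n := by omega
  -- no other fixed points
  have hnofix : ∀ x, x < 2 * D.n → x ≠ 2 * D.n - 1 → D.bd x ≠ x := by
    intro x hx hxtop hfx
    rw [hbd] at hfx
    have hgx : gammaOne (2 * D.n) x = x + 1 := by
      unfold gammaOne; split_ifs <;> omega
    rw [hgx] at hfx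
    have harc : D.arc x (x + 1) := ⟨hx, hinvol.injective (by rw [hinv, hfx])⟩
    have := hone x harc
    omega
  -- every non-rainbow orbit has at least 3 elements
  have hbig : ∀ S ∈ Os, S ≠ orbitOf D.bd (2 * D.n - 1) → 3 ≤ S.ncard := by
    intro S hS hSne
    obtain ⟨x, hxk, hSeq⟩ : ∃ x, x < 2 * D.n ∧ S = orbitOf D.bd x := by
      have := hOs ▸ (Finset.mem_coe.2 hS)
      exact this
    subst hSeq
    have hStop : (2 * D.n - 1) ∉ orbitOf D.bd x := by
      intro h
      exact hSne (orbit_eq_of_mem hlt hinj hxk h).symm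
    have hxtop : x ≠ 2 * D.n - 1 := fun h => hStop (h ▸ ⟨0, rfl⟩)
    set y := D.bd x with hy
    have hyk : y < 2 * D.n := hlt x hxk
    have hymem : y ∈ orbitOf D.bd x := ⟨1, rfl⟩
    have hytop : y ≠ 2 * D.n - 1 := fun h => hStop (h ▸ hymem)
    have hyx : y ≠ x := hnofix x hxk hxtop
    have hzy : D.bd y ≠ y := hnofix y hyk hytop
    have hzx : D.bd y ≠ x := by
      intro h2
      -- unfold the two boundary steps into arc data
      have hgx : gammaOne (2 * D.n) x = x + 1 := by
        unfold gammaOne; split_ifs <;> omega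
      have hgy : gammaOne (2 * D.n) y = y + 1 := by
        unfold gammaOne; split_ifs <;> omega
      have hf1 : D.f (x + 1) = y := by rw [hy, hbd, hgx]
      have hf2 : D.f (y + 1) = x := by
        rw [← h2, hbd, hgy]
      have hfy : D.f y = x + 1 := hinvol.injective (by rw [hinv, hf1])
      have hfx : D.f x = y + 1 := hinvol.injective (by rw [hinv, hf2])
      rcases Nat.lt_or_ge x y with hxy | hxy
      · have a1 : D.arc x (y + 1) := ⟨hxk, hfx⟩
        have a2 : D.arc (x + 1) (y + 1 - 1) := by
          have : y + 1 - 1 = y := rfl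
          rw [this]
          exact ⟨by omega, hf1⟩
        have := hstack x (y + 1) a1 a2
        have hys : y = x + 1 := by omega
        exact hfpf (x + 1) (by omega) (by rw [hf1, hys])
      · have hxy' : y < x := by omega
        have a1 : D.arc y (x + 1) := ⟨hyk, hfy⟩
        have a2 : D.arc (y + 1) (x + 1 - 1) := by
          have : x + 1 - 1 = x := rfl
          rw [this]
          exact ⟨by omega, hf2⟩
        have := hstack y (x + 1) a1 a2
        have hys : x = y + 1 := by omega
        exact hfpf (y + 1) (by omega) (by rw [hf2, hys])
    have hzmem : D.bd y ∈ orbitOf D.bd x := ⟨2, by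
      rw [show (2 : ℕ) = 1 + 1 from rfl, Function.iterate_add_apply]
      simp [hy]⟩
    have hsub : ({x, y, D.bd y} : Set ℕ) ⊆ orbitOf D.bd x := by
      intro z hz
      rcases hz with rfl | rfl | rfl
      · exact ⟨0, rfl⟩
      · exact hymem
      · exact hzmem
    have hfin : (orbitOf D.bd x).Finite := by
      apply (Set.finite_Iio (2 * D.n)).subset
      rintro z ⟨j, rfl⟩
      exact iter_lt hlt hxk j
    have hcard3 : ({x, y, D.bd y} : Set ℕ).ncard = 3 := by
      rw [Set.ncard_insert_of_notMem (by simp [hyx.symm, Ne.symm hzx]),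
        Set.ncard_pair (Ne.symm hzy)]
    rw [← hcard3]
    exact Set.ncard_le_ncard hsub hfin
  -- sum up
  have hsum1 := Finset.add_sum_erase Os (fun S => S.ncard) htop_mem
  have hTge : (Os.erase (orbitOf D.bd (2 * D.n - 1))).card • 3 ≤
      ∑ S ∈ Os.erase (orbitOf D.bd (2 * D.n - 1)), S.ncard :=
    Finset.card_nsmul_le_sum _ _ _ fun S hS =>
      hbig S (Finset.mem_of_mem_erase hS) (Finset.ne_of_mem_erase hS)
  rw [Finset.card_erase_of_mem htop_mem, smul_eq_mul] at hTge
  rw [horbtop] at hsum1 hTge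
  simp only [Set.ncard_singleton, hsumtotal] at hsum1
  omega

end RNA
end

section
/- For every fixed g ≥ 0, the set of all 1-backbone shapes of genus g (over all n) is finite. -/
namespace RNA

/-! For `n ≥ 2`, the boundary permutation `α ∘ γ` of a shape fixes the last vertex `2n-1` (this is the
rainbow's boundary component) and has no other cycle of length `1` or `2`: a fixed point `x`
would be a 1-arc `{x, x+1}`, and a 2-cycle `x ↦ y ↦ x` would be a stack `{x, y+1}, {x+1, y}`.
So the `2n` vertices carry one cycle of length `1` and `r - 1` cycles of length at least `3`,
giving `3r ≤ 2n + 2`. Together with `2g + r = n + 1` this bounds `n` by `6g + 1`, and there are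
only finitely many diagrams with a bounded number of arcs. -/

open Function Set

theorem mem_periodicPts_of_mapsTo_of_injOn {α : Type*} {f : α → α} {s : Set α}
    (hs : s.Finite) (hmap : MapsTo f s s) (hinj : InjOn f s) {x : α} (hx : x ∈ s) :
    x ∈ periodicPts f := by
  have : Finite s := hs.to_subtype
  obtain ⟨n, hn, hper⟩ := (hmap.restrict_inj.2 hinj).mem_periodicPts ⟨x, hx⟩
  refine ⟨n, hn, ?_⟩
  simpa [IsPeriodicPt, IsFixedPt, hmap.iterate_restrict, Subtype.ext_iff] using hper

section Orbits

variable {f : ℕ → ℕ} {s : Set ℕ} {x y : ℕ}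

theorem orbitOf_subset (hmap : MapsTo f s s) (hx : x ∈ s) : orbitOf f x ⊆ s := by
  rintro _ ⟨j, rfl⟩
  exact hmap.iterate j hx

theorem orbitOf_eq_of_mem (hx : x ∈ periodicPts f) (hy : y ∈ orbitOf f x) :
    orbitOf f y = orbitOf f x := by
  obtain ⟨j, rfl⟩ := hy
  obtain ⟨p, hp0, hp⟩ := hx
  ext z
  constructor
  · rintro ⟨i, rfl⟩
    exact ⟨i + j, iterate_add_apply f i j x⟩
  · rintro ⟨i, rfl⟩
    refine ⟨i + (j * p - j), ?_⟩
    rw [← iterate_add_apply, Nat.add_assoc, Nat.sub_add_cancel (Nat.le_mul_of_pos_right j hp0),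
      iterate_add_apply, (hp.const_mul j).eq]

theorem three_le_ncard_orbitOf (hs : s.Finite) (hmap : MapsTo f s s) (hinj : InjOn f s)
    (hx : x ∈ s) (hfix : f x ≠ x) (htwo : f (f x) ≠ x) : 3 ≤ (orbitOf f x).ncard := by
  have hfix' : f (f x) ≠ f x := fun h => hfix (hinj (hmap hx) hx h)
  calc 3 = ({x, f x, f (f x)} : Set ℕ).ncard :=
        (Set.ncard_eq_three.2 ⟨x, f x, f (f x), hfix.symm, htwo.symm, hfix'.symm, rfl⟩).symm
    _ ≤ (orbitOf f x).ncard := by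
      refine Set.ncard_le_ncard ?_ (hs.subset (orbitOf_subset hmap hx))
      rintro _ (rfl | rfl | rfl)
      exacts [⟨0, rfl⟩, ⟨1, rfl⟩, ⟨2, rfl⟩]

theorem numCyclesOn_eq_card_image [DecidableEq (Set ℕ)] (f : ℕ → ℕ) (k : ℕ) :
    numCyclesOn f k = ((Finset.range k).image (orbitOf f)).card := by
  rw [numCyclesOn, ← Set.ncard_coe_finset]
  congr 1
  ext S
  simp [eq_comm]

theorem three_mul_numCyclesOn_le {k c : ℕ} (hmap : MapsTo f (Iio k) (Iio k))
    (hinj : InjOn f (Iio k)) (hc : c < k)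
    (hlong : ∀ x < k, orbitOf f x ≠ orbitOf f c → 3 ≤ (orbitOf f x).ncard) :
    3 * numCyclesOn f k ≤ k + 2 := by
  classical
  rw [numCyclesOn_eq_card_image]
  set O := (Finset.range k).image (orbitOf f)
  set fiber : Set ℕ → ℕ := fun S => ((Finset.range k).filter (orbitOf f · = S)).card
  have hpoints : k = ∑ S ∈ O, fiber S := by
    simpa using Finset.card_eq_sum_card_image (orbitOf f) (Finset.range k)
  have hfiber : ∀ x < k, (orbitOf f x).ncard ≤ fiber (orbitOf f x) := by
    intro x hx
    simp only [fiber]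
    rw [← Set.ncard_coe_finset]
    refine Set.ncard_le_ncard ?_ (Finset.finite_toSet _)
    intro y hy
    have hper := mem_periodicPts_of_mapsTo_of_injOn (finite_Iio k) hmap hinj hx
    simpa [orbitOf_eq_of_mem hper hy] using orbitOf_subset hmap hx hy
  have hcO : orbitOf f c ∈ O := Finset.mem_image_of_mem _ (Finset.mem_range.2 hc)
  have hrest : 3 * (O.erase (orbitOf f c)).card ≤ ∑ S ∈ O.erase (orbitOf f c), fiber S := by
    rw [mul_comm, ← smul_eq_mul]
    refine Finset.card_nsmul_le_sum _ _ _ fun S hS => ?_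
    obtain ⟨hSc, hSO⟩ := Finset.mem_erase.1 hS
    obtain ⟨x, hx, rfl⟩ := Finset.mem_image.1 hSO
    exact (hlong x (Finset.mem_range.1 hx) hSc).trans (hfiber x (Finset.mem_range.1 hx))
  have hone : 1 ≤ fiber (orbitOf f c) := Finset.card_pos.2 ⟨c, by simp [hc]⟩
  have hOpos : 0 < O.card := Finset.card_pos.2 ⟨_, hcO⟩
  rw [← Finset.add_sum_erase _ _ hcO] at hpoints
  rw [Finset.card_erase_of_mem hcO] at hrest
  omega

end Orbits

theorem gammaOne_injective (k : ℕ) : Injective (gammaOne k) := by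
  intro a b h
  unfold gammaOne at h
  split_ifs at h <;> omega

namespace OneD

variable {D : OneD}

theorem WF.bd_injective (hD : D.WF) : Injective D.bd :=
  (Involutive.injective hD.2.2.2.1).comp (gammaOne_injective _)

theorem WF.bd_mapsTo (hD : D.WF) : MapsTo D.bd (Iio (2 * D.n)) (Iio (2 * D.n)) := by
  intro x (hx : x < 2 * D.n)
  refine hD.2.1 _ ?_
  unfold gammaOne
  split_ifs <;> omega

theorem WF.bd_last (hD : D.WF) : D.bd (2 * D.n - 1) = 2 * D.n - 1 := by
  have hn := hD.1
  simp only [bd, comp_apply, gammaOne, if_pos (show 2 * D.n - 1 + 1 = 2 * D.n by omega)]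
  exact hD.2.2.2.2.2

theorem bd_of_succ_lt {x : ℕ} (hx : x + 1 < 2 * D.n) : D.bd x = D.f (x + 1) := by
  simp only [bd, comp_apply, gammaOne]
  rw [if_neg (by omega), if_pos (by omega)]

theorem IsShape.bd_ne_self (hD : D.WF) (hS : D.IsShape) (hn : 2 ≤ D.n) {x : ℕ}
    (hx : x + 1 < 2 * D.n) : D.bd x ≠ x := by
  intro hfix
  rw [bd_of_succ_lt hx] at hfix
  have harc : D.arc x (x + 1) := ⟨by omega, by rw [← hD.2.2.2.1 (x + 1), hfix]⟩
  have := hS.1 x harc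
  omega

theorem IsShape.bd_bd_ne_self (hD : D.WF) (hS : D.IsShape) (hn : 2 ≤ D.n) {x : ℕ}
    (hx : x + 1 < 2 * D.n) : D.bd (D.bd x) ≠ x := by
  intro htwo
  set y := D.bd x
  have hyx : y ≠ x := hS.bd_ne_self hD hn hx
  have hy_last : y + 1 < 2 * D.n := by
    have : y < 2 * D.n := hD.bd_mapsTo (show x < 2 * D.n by omega)
    have : y ≠ 2 * D.n - 1 := fun h => by rw [h, hD.bd_last] at htwo; omega
    omega
  have hfx : D.f (x + 1) = y := (bd_of_succ_lt hx).symm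
  have hfy : D.f (y + 1) = x := by rw [← bd_of_succ_lt hy_last, htwo]
  have hfx' : D.f x = y + 1 := by rw [← hfy, hD.2.2.2.1]
  have hfy' : D.f y = x + 1 := by rw [← hfx, hD.2.2.2.1]
  -- `{x, y+1}` and `{x+1, y}` are arcs; the outer one would form a stack with the inner one
  have hnot_one_arc : y ≠ x + 1 ∧ x ≠ y + 1 := by
    refine ⟨fun h => hD.2.2.2.2.1 y (by omega) (by rw [hfy', h]), fun h => ?_⟩
    exact hD.2.2.2.2.1 x (by omega) (by rw [hfx', h])
  have stack_xy := hS.2 x (y + 1) ⟨by omega, hfx'⟩ ⟨by omega, by simpa using hfx⟩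
  have stack_yx := hS.2 y (x + 1) ⟨by omega, hfy'⟩ ⟨by omega, by simpa using hfy⟩
  simp only [Nat.add_sub_cancel] at stack_xy stack_yx
  omega

theorem IsShape.three_mul_r_le (hD : D.WF) (hS : D.IsShape) (hn : 2 ≤ D.n) :
    3 * D.r ≤ 2 * D.n + 2 := by
  refine three_mul_numCyclesOn_le hD.bd_mapsTo hD.bd_injective.injOn
    (c := 2 * D.n - 1) (by omega) fun x hx hne => ?_
  have hx_last : x + 1 < 2 * D.n := by
    by_contra h
    exact hne (by rw [show x = 2 * D.n - 1 by omega])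
  exact three_le_ncard_orbitOf (finite_Iio _) hD.bd_mapsTo hD.bd_injective.injOn hx
    (hS.bd_ne_self hD hn hx_last) (hS.bd_bd_ne_self hD hn hx_last)

theorem IsShape.n_le (hD : D.WF) (hS : D.IsShape) {g : ℕ} (hG : D.HasGenus g) :
    D.n ≤ 6 * g + 1 := by
  rcases Nat.lt_or_ge D.n 2 with hn | hn
  · omega
  have := hS.three_mul_r_le hD hn
  unfold HasGenus at hG
  omega

theorem finite_setOf_wf_n_le (N : ℕ) : {D : OneD | D.WF ∧ D.n ≤ N}.Finite := by
  let encode : OneD → ℕ × (Fin (2 * N) → ℕ) := fun D => (D.n, fun i => D.f i)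
  refine Set.Finite.of_finite_image (f := encode) ?_ ?_
  · refine ((finite_Iic N).prod (Set.Finite.pi fun _ => finite_Iio (2 * N))).subset ?_
    rintro _ ⟨D, ⟨hD, hDN⟩, rfl⟩
    refine ⟨hDN, fun i _ => ?_⟩
    show D.f i < 2 * N
    rcases Nat.lt_or_ge i (2 * D.n) with hi | hi
    · have := hD.2.1 i hi; omega
    · rw [hD.2.2.1 i hi]; exact i.2
  · rintro ⟨n, f⟩ ⟨hD, hDN⟩ ⟨n', f'⟩ ⟨hE, -⟩ hencode
    simp only [encode, Prod.mk.injEq] at hencode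
    obtain ⟨rfl, hf⟩ := hencode
    simp only [mk.injEq, true_and]
    funext i
    rcases Nat.lt_or_ge i (2 * n) with hi | hi
    · exact congrFun hf ⟨i, by simp only at hDN; omega⟩
    · exact (hD.2.2.1 i hi).trans (hE.2.2.1 i hi).symm

end OneD

/-- For every fixed `g ≥ 0`, the set of all 1-backbone shapes of
genus `g` (over all `n`) is finite. -/
theorem oneShapeSet_finite (g : ℕ) : (oneShapeSet g).Finite :=
  (OneD.finite_setOf_wf_n_le (6 * g + 1)).subset fun _ ⟨hD, hS, hG⟩ => ⟨hD, hS.n_le hD hG⟩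

end RNA
end
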